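/- arXiv:2406.05497 — 3 statements merged into one kernel-verified Lean document; each statement's English description precedes it below -/
import Mathlib

section
/- Fix m ≥ 1 and a row vector β ∈ ℂ^m, and let a ∈ GL_{m+1}(ℂ) be the block matrix a = [[1, β],[0, 1_m]]. If g ∈ GL_{m+1}(ℂ) satisfies a^k · g · a^{−k} → 1 as k → +∞, then g = 1. -/
/-! Write `a = 1 + N` with `N * N = 0`. Then `a ^ k * g * a⁻¹ ^ k = g + k (N g - g N) - k² N g N`
is quadratic in `k`. A convergent sequence that is polynomial in `k` is constant, since its first
difference tends to `0` and has lower degree (the leading coefficient gets doubled, whence the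
torsion-freeness); so `g` is the limit `1`. -/

open Matrix Filter Topology

theorem eq_zero_of_tendsto_add_nsmul {E : Type*} [AddCommGroup E] [TopologicalSpace E]
    [IsTopologicalAddGroup E] [T2Space E] {x y l : E}
    (h : Tendsto (fun k : ℕ => x + k • y) atTop (𝓝 l)) : y = 0 ∧ x = l := by
  have hdiff : Tendsto (fun _ : ℕ => y) atTop (𝓝 (l - l)) :=
    (((tendsto_add_atTop_iff_nat 1).2 h).sub h).congr fun k => by
      simp only [add_smul, one_smul, add_sub_add_left_eq_sub, add_sub_cancel_left]
  obtain rfl : y = 0 := by simpa using tendsto_nhds_unique tendsto_const_nhds hdiff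
  simp only [smul_zero, add_zero] at h
  exact ⟨rfl, tendsto_nhds_unique tendsto_const_nhds h⟩

theorem eq_of_tendsto_add_nsmul_add_sq_nsmul {E : Type*} [AddCommGroup E] [TopologicalSpace E]
    [IsTopologicalAddGroup E] [T2Space E] [IsAddTorsionFree E] {x y z l : E}
    (h : Tendsto (fun k : ℕ => x + k • y + k ^ 2 • z) atTop (𝓝 l)) : x = l := by
  have hdiff : Tendsto (fun k : ℕ => (y + z) + k • (2 • z)) atTop (𝓝 (l - l)) := by
    refine (((tendsto_add_atTop_iff_nat 1).2 h).sub h).congr fun k => ?_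
    simp only [add_sq, add_smul, one_smul, smul_smul, mul_one, one_pow]
    rw [mul_comm k 2]
    abel
  obtain rfl : z = 0 := by simpa using (eq_zero_of_tendsto_add_nsmul hdiff).1
  simp only [smul_zero, add_zero] at h
  exact (eq_zero_of_tendsto_add_nsmul h).2

theorem one_add_pow_of_mul_self_eq_zero {R : Type*} [Ring R] {N : R} (hN : N * N = 0) (k : ℕ) :
    (1 + N) ^ k = 1 + k • N := by
  induction k with
  | zero => simp
  | succ k ih =>
    rw [pow_succ, ih, add_mul, one_mul, mul_add, mul_one, smul_mul_assoc, hN, smul_zero, add_zero,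
      succ_nsmul]
    abel

theorem one_add_pow_mul_mul_one_sub_pow_of_mul_self_eq_zero {R : Type*} [Ring R] {N : R}
    (hN : N * N = 0) (g : R) (k : ℕ) :
    (1 + N) ^ k * g * (1 - N) ^ k = g + k • (N * g - g * N) + k ^ 2 • (-(N * g * N)) := by
  rw [sub_eq_add_neg, one_add_pow_of_mul_self_eq_zero hN,
    one_add_pow_of_mul_self_eq_zero (by rwa [neg_mul_neg])]
  simp only [add_mul, mul_add, one_mul, mul_one, smul_mul_assoc, mul_smul_comm, smul_smul, sq,
    mul_neg, smul_neg, smul_sub, smul_add]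
  abel

theorem Units.eq_one_of_tendsto_conj_pow {R : Type*} [Ring R] [TopologicalSpace R]
    [IsTopologicalAddGroup R] [T2Space R] [IsAddTorsionFree R] {a g : Rˣ}
    (ha : ((a : R) - 1) * ((a : R) - 1) = 0)
    (h : Tendsto (fun k : ℕ => ((a ^ k * g * a⁻¹ ^ k : Rˣ) : R)) atTop (𝓝 1)) : g = 1 := by
  set N := (a : R) - 1
  have ha' : (a : R) = 1 + N := by simp [N]
  have hinv : ((a⁻¹ : Rˣ) : R) = 1 - N := Units.inv_eq_of_mul_eq_one_right <| by
    rw [ha', mul_sub, mul_one, add_mul, one_mul, ha, add_zero, add_sub_cancel_right]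
  simp only [Units.val_mul, Units.val_pow_eq_pow_val, hinv, ha',
    one_add_pow_mul_mul_one_sub_pow_of_mul_self_eq_zero ha] at h
  exact Units.ext (eq_of_tendsto_add_nsmul_add_sq_nsmul h)

/-- If `a = [[1, β],[0, 1]]` is a unipotent block upper-triangular element of
`GL_{m+1}(ℂ)` and `a^k g a^{-k} → 1`, then `g = 1`. -/
theorem unipotent_conjugation_contracts_only_identity
    (m : ℕ) (β : Matrix (Fin 1) (Fin m) ℂ)
    (a g : (Matrix (Fin 1 ⊕ Fin m) (Fin 1 ⊕ Fin m) ℂ)ˣ)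
    (ha : (a : Matrix (Fin 1 ⊕ Fin m) (Fin 1 ⊕ Fin m) ℂ) = Matrix.fromBlocks 1 β 0 1)
    (hconv : Tendsto
      (fun k : ℕ => ((a ^ k * g * a⁻¹ ^ k : (Matrix (Fin 1 ⊕ Fin m) (Fin 1 ⊕ Fin m) ℂ)ˣ) :
        Matrix (Fin 1 ⊕ Fin m) (Fin 1 ⊕ Fin m) ℂ))
      atTop (nhds 1)) :
    g = 1 := by
  have : IsAddTorsionFree (Matrix (Fin 1 ⊕ Fin m) (Fin 1 ⊕ Fin m) ℂ) := .of_module_rat _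
  have hN : (a : Matrix (Fin 1 ⊕ Fin m) (Fin 1 ⊕ Fin m) ℂ) - 1 = fromBlocks 0 β 0 0 := by
    ext (i | i) (j | j) <;> simp [ha, one_apply]
  refine Units.eq_one_of_tendsto_conj_pow ?_ hconv
  rw [hN, fromBlocks_multiply]
  simp
end

section
/- Let a = [[1,1],[0,1]] ∈ GL₂(ℝ). For any g ∈ GL₂(ℝ), if the sequence a^k g a^{−k} converges to the identity matrix as k → +∞, then g is the identity matrix. -/
/-!
Conjugating `g = [[p, q], [r, s]]` by `a^k` gives `[[p + k r, q + k (s - p) - k² r], [r, s - k r]]`.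
The lower-left entry is the constant `r`, so `r = 0`; then the diagonal entries are the constants
`p` and `s`, so `p = s = 1`; and then the upper-right entry is the constant `q`, so `q = 0`.
-/

open Matrix Filter

section Shear

variable {R : Type*} [CommRing R]

theorem shear_pow (t : R) (k : ℕ) : !![1, t; 0, 1] ^ k = !![1, k * t; 0, 1] := by
  induction k with
  | zero => simp [one_fin_two]
  | succ n ih => simp [pow_succ, ih, add_mul, add_comm]

theorem shear_inv (t : R) : (!![1, t; 0, 1])⁻¹ = !![1, -t; 0, 1] :=
  inv_eq_right_inv <| by simp [one_fin_two]

theorem shear_mul_mul_shear_neg (t p q r s : R) :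
    !![1, t; 0, 1] * !![p, q; r, s] * !![1, -t; 0, 1] =
      !![p + t * r, q + t * (s - p) - t ^ 2 * r; r, s - t * r] := by
  rw [mul_fin_two, mul_fin_two]
  congr 1
  ring_nf

theorem shear_pow_mul_mul_inv_pow (g : Matrix (Fin 2) (Fin 2) R) (k : ℕ) :
    !![1, 1; 0, 1] ^ k * g * (!![1, 1; 0, 1]⁻¹) ^ k =
      !![g 0 0 + k * g 1 0, g 0 1 + k * (g 1 1 - g 0 0) - k ^ 2 * g 1 0;
        g 1 0, g 1 1 - k * g 1 0] := by
  rw [inv_pow', shear_pow, shear_inv, mul_one, ← shear_mul_mul_shear_neg, ← eta_fin_two g]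

end Shear

theorem shear_conjugation_contracts_only_identity_general
    (g : Matrix (Fin 2) (Fin 2) ℝ)
    (a : Matrix (Fin 2) (Fin 2) ℝ) (ha : a = !![1, 1; 0, 1])
    (hconv : Tendsto (fun k : ℕ => a ^ k * g * (a⁻¹) ^ k) atTop (nhds 1)) :
    g = 1 := by
  subst ha
  have hlim (i j : Fin 2) := tendsto_pi_nhds.1 (tendsto_pi_nhds.1 hconv i) j
  simp only [shear_pow_mul_mul_inv_pow] at hlim
  have hr : g 1 0 = 0 := by simpa using tendsto_const_nhds_iff.1 (hlim 1 0)
  have hp : g 0 0 = 1 := by simpa [hr] using hlim 0 0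
  have hs : g 1 1 = 1 := by simpa [hr] using hlim 1 1
  have hq : g 0 1 = 0 := by simpa [hr, hp, hs] using hlim 0 1
  ext i j
  fin_cases i <;> fin_cases j <;> simp [*]

/-- For `a = [[1,1],[0,1]] ∈ GL₂(ℝ)` and invertible `g`, if `a^k g a^{-k}` converges
to the identity as `k → ∞`, then `g` is the identity. -/
theorem shear_conjugation_contracts_only_identity
    (g : Matrix (Fin 2) (Fin 2) ℝ) (hg : IsUnit g)
    (a : Matrix (Fin 2) (Fin 2) ℝ) (ha : a = !![1, 1; 0, 1])
    (hconv : Tendsto (fun k : ℕ => a ^ k * g * (a⁻¹) ^ k) atTop (nhds 1)) :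
    g = 1 :=
  shear_conjugation_contracts_only_identity_general g a ha hconv
end

section
/- Fix p, q ≥ 0, n = p+q, s ∈ ℝ, and a row vector β ∈ ℂ^n; let I = I_{p,q} be the diagonal (+1^p, −1^q) matrix and B = β I β̄ᵀ ∈ ℝ. Define ζ : [0,1] → ℂ × ℂ^n × ℂ by ζ(t) = (t(t−s) − (i/2)B, −t i I β̄ᵀ, t² i). Then for every t ∈ [0,1], ζ(t) lies on the null cone of the Hermitian form h_{p,q}, i.e., 2 Re( conj(r)·c ) + x̄ᵀ I x = 0, where (r, x, c) = ζ(t). -/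
open Complex

/-- The diagonal of `I_{p,q}`: `p` entries `+1` followed by `q` entries `−1`. -/
def crIpq (p q : ℕ) : Fin (p + q) → ℝ := fun j => if (j : ℕ) < p then 1 else -1

lemma crIpq_sq (p q : ℕ) (j : Fin (p + q)) : ((crIpq p q j : ℝ) : ℂ) ^ 2 = 1 := by
  unfold crIpq
  split <;> norm_num

/-- The path `ζ(t) = (t(t−s) − (i/2)B, −t·i·Iβ̄ᵀ, t²i)` lies on the null cone of the
Hermitian form `h_{p,q}`, i.e. `2Re(conj r · c) + x̄ᵀ I x = 0` for each `t ∈ [0,1]`. -/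
theorem cr_path_on_null_cone (p q : ℕ) (s : ℝ) (β : Fin (p + q) → ℂ) :
    ∀ t ∈ Set.Icc (0 : ℝ) 1,
      let B : ℂ := ∑ j, β j * (crIpq p q j : ℂ) * (starRingEnd ℂ) (β j)
      let r : ℂ := ((t : ℂ) * ((t : ℂ) - (s : ℂ))) - (Complex.I / 2) * B
      let x : Fin (p + q) → ℂ :=
        fun j => -(t : ℂ) * Complex.I * (crIpq p q j : ℂ) * (starRingEnd ℂ) (β j)
      let c : ℂ := (t : ℂ) ^ 2 * Complex.I
      2 * ((starRingEnd ℂ) r * c).re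
        + (∑ j, (starRingEnd ℂ) (x j) * (crIpq p q j : ℂ) * x j).re = 0 := by
  intro t ht
  simp only
  set b : ℝ := ∑ j, crIpq p q j * Complex.normSq (β j) with hb
  have hB : (∑ j, β j * (crIpq p q j : ℂ) * (starRingEnd ℂ) (β j)) = (b : ℂ) := by
    rw [hb, Complex.ofReal_sum]
    refine Finset.sum_congr rfl fun j _ => ?_
    rw [Complex.ofReal_mul, ← Complex.mul_conj]
    ring
  have hsum : (∑ j, (starRingEnd ℂ)
        (-(t : ℂ) * Complex.I * (crIpq p q j : ℂ) * (starRingEnd ℂ) (β j))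
        * (crIpq p q j : ℂ)
        * (-(t : ℂ) * Complex.I * (crIpq p q j : ℂ) * (starRingEnd ℂ) (β j)))
      = (t : ℂ) ^ 2 * (b : ℂ) := by
    rw [hb, Complex.ofReal_sum, Finset.mul_sum]
    refine Finset.sum_congr rfl fun j _ => ?_
    have h1 := crIpq_sq p q j
    have h2 : β j * (starRingEnd ℂ) (β j) = (Complex.normSq (β j) : ℂ) :=
      Complex.mul_conj _
    have h3 : (starRingEnd ℂ) (-(t : ℂ) * Complex.I * (crIpq p q j : ℂ) *
        (starRingEnd ℂ) (β j)) = (t : ℂ) * Complex.I * (crIpq p q j : ℂ) * β j := by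
      simp only [map_mul, map_neg, Complex.conj_ofReal, Complex.conj_I, Complex.conj_conj]
      ring
    rw [h3, Complex.ofReal_mul]
    have h4 : (t : ℂ) * Complex.I * (crIpq p q j : ℂ) * β j * (crIpq p q j : ℂ) *
        (-(t : ℂ) * Complex.I * (crIpq p q j : ℂ) * (starRingEnd ℂ) (β j))
        = (t : ℂ) ^ 2 * (-(Complex.I ^ 2)) * ((crIpq p q j : ℂ) ^ 2) *
          ((crIpq p q j : ℂ) * (β j * (starRingEnd ℂ) (β j))) := by ring
    rw [h4, Complex.I_sq, h1, h2]
    ring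
  rw [hB, hsum]
  have hr : (starRingEnd ℂ) (((t : ℂ) * ((t : ℂ) - (s : ℂ))) - (Complex.I / 2) * (b : ℂ))
      = ((t : ℂ) * ((t : ℂ) - (s : ℂ))) + (Complex.I / 2) * (b : ℂ) := by
    simp [map_sub, map_mul, map_div₀, map_ofNat, Complex.conj_ofReal, Complex.conj_I]
    ring
  rw [hr]
  simp [Complex.add_re, Complex.mul_re, Complex.mul_im, Complex.sub_re, Complex.sub_im,
    Complex.I_re, Complex.I_im, Complex.ofReal_re, Complex.ofReal_im, Complex.div_re,
    Complex.div_im, ← Complex.ofReal_pow]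
  ring
end
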